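/- arXiv:2006.11688 — 4 statements merged into one kernel-verified Lean document; each statement's English description precedes it below -/
import Mathlib

section
/- In the space of binary cubics, x₁²x₂ lies in the closure (Euclidean, over ℂ) of the GL(2,ℂ)-orbit of x₁³ + x₁x₂². Concretely, x₁x₂ = lim_{ε→0} (x₁² − (x₁ − εx₂)²)/(2ε), and hence x₁²x₂ is a limit of polynomials of the form ℓ₁³ + ℓ₁ℓ₂² with ℓ₁, ℓ₂ linear forms. -/
open MvPolynomial Filter Topology

/-- The linear form `∑ i, cᵢ xᵢ`. -/
noncomputable def linForm {n : ℕ} (c : Fin n → ℂ) : MvPolynomial (Fin n) ℂ :=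
  ∑ i, C (c i) * X i

/-- The substitution of the linear forms `xᵢ ↦ ∑ j, g i j • xⱼ` into a polynomial,
i.e. the linear change of coordinates with matrix `g`. -/
noncomputable def substMat {n : ℕ} (g : Matrix (Fin n) (Fin n) ℂ) :
    MvPolynomial (Fin n) ℂ →ₐ[ℂ] MvPolynomial (Fin n) ℂ :=
  aeval fun i => ∑ j, C (g i j) * X j

/-- The orbit of `f` under `GL(n, ℂ)` acting by linear change of coordinates. -/
noncomputable def orbitSet {n : ℕ} (f : MvPolynomial (Fin n) ℂ) :
    Set (MvPolynomial (Fin n) ℂ) :=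
  {p | ∃ g : Matrix (Fin n) (Fin n) ℂ, IsUnit g.det ∧ p = substMat g f}

/-- The coefficient function of a polynomial; convergence of the coefficient functions
in the product topology is exactly coefficient-wise convergence. -/
noncomputable def coeffFn {n : ℕ} (f : MvPolynomial (Fin n) ℂ) : (Fin n →₀ ℕ) → ℂ :=
  fun m => coeff m f

/- Auxiliary material -/

noncomputable def degL₁ (ε : ℂ) : Fin 2 → ℂ := ![ε⁻¹, 0]

noncomputable def degL₂ (ε : ℂ) : Fin 2 → ℂ := ![Complex.I * ε⁻¹, -Complex.I * ε ^ 2 / 2]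

lemma expand_aux (a b c : ℂ) :
    (C a * X 0) ^ 3 + (C a * X 0) * (C b * X 0 + C c * X 1) ^ 2 =
      C (a * (a ^ 2 + b ^ 2)) * X 0 ^ 3 + C (2 * a * b * c) * (X 0 ^ 2 * X 1)
        + C (a * c ^ 2) * ((X 0 : MvPolynomial (Fin 2) ℂ) * X 1 ^ 2) := by
  simp only [map_mul, map_add, map_pow, map_ofNat]
  ring

lemma key_eq (ε : ℂ) (hε : ε ≠ 0) :
    linForm (degL₁ ε) ^ 3 + linForm (degL₁ ε) * linForm (degL₂ ε) ^ 2 =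
      X 0 ^ 2 * X 1 + C (-(ε ^ 3) / 4) * ((X 0 : MvPolynomial (Fin 2) ℂ) * X 1 ^ 2) := by
  have h1 : ε⁻¹ * ((ε⁻¹) ^ 2 + (Complex.I * ε⁻¹) ^ 2) = 0 := by
    rw [mul_pow, Complex.I_sq]; ring
  have h2 : 2 * ε⁻¹ * (Complex.I * ε⁻¹) * (-Complex.I * ε ^ 2 / 2) = 1 := by
    field_simp
    linear_combination (-1) * Complex.I_mul_I
  have h3 : ε⁻¹ * (-Complex.I * ε ^ 2 / 2) ^ 2 = -(ε ^ 3) / 4 := by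
    field_simp
    linear_combination 4 * Complex.I_mul_I
  simp only [linForm, degL₁, degL₂, Fin.sum_univ_two, Matrix.cons_val_zero, Matrix.cons_val_one,
    Matrix.head_cons, map_zero, zero_mul, add_zero]
  rw [expand_aux, h1, h2, h3]
  simp

lemma coeff_tendsto (m : Fin 2 →₀ ℕ) :
    Filter.Tendsto (fun ε : ℂ =>
        coeff m (linForm (degL₁ ε) ^ 3 + linForm (degL₁ ε) * linForm (degL₂ ε) ^ 2))
      (𝓝[≠] 0) (𝓝 (coeff m (X 0 ^ 2 * X 1 : MvPolynomial (Fin 2) ℂ))) := by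
  have heq : ∀ᶠ ε : ℂ in 𝓝[≠] 0,
      coeff m (X 0 ^ 2 * X 1 : MvPolynomial (Fin 2) ℂ)
        + (-(ε ^ 3) / 4) * coeff m ((X 0 : MvPolynomial (Fin 2) ℂ) * X 1 ^ 2)
      = coeff m (linForm (degL₁ ε) ^ 3 + linForm (degL₁ ε) * linForm (degL₂ ε) ^ 2) := by
    filter_upwards [self_mem_nhdsWithin] with ε hε
    rw [key_eq ε hε, coeff_add, coeff_C_mul]
  have hcont : Filter.Tendsto (fun ε : ℂ =>
      coeff m (X 0 ^ 2 * X 1 : MvPolynomial (Fin 2) ℂ)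
        + (-(ε ^ 3) / 4) * coeff m ((X 0 : MvPolynomial (Fin 2) ℂ) * X 1 ^ 2))
      (𝓝[≠] 0) (𝓝 (coeff m (X 0 ^ 2 * X 1 : MvPolynomial (Fin 2) ℂ))) := by
    have h : Continuous (fun ε : ℂ =>
        coeff m (X 0 ^ 2 * X 1 : MvPolynomial (Fin 2) ℂ)
          + (-(ε ^ 3) / 4) * coeff m ((X 0 : MvPolynomial (Fin 2) ℂ) * X 1 ^ 2)) := by
      fun_prop
    have := (h.tendsto 0).mono_left (nhdsWithin_le_nhds : 𝓝[≠] (0:ℂ) ≤ 𝓝 0)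
    simpa using this
  exact hcont.congr' heq

lemma part1_poly (ε : ℂ) :
    (X 0 ^ 2 - (X 0 - C ε * X 1) ^ 2 : MvPolynomial (Fin 2) ℂ)
      = C ε * (2 * (X 0 * X 1) - C ε * X 1 ^ 2) := by
  ring

/-- In the space of binary cubics, `x₁²x₂` lies in the (coefficient-wise, equivalently
Euclidean) closure of the `GL(2,ℂ)`-orbit of `x₁³ + x₁x₂²`.  Concretely,
`x₁x₂ = lim_{ε→0} (x₁² − (x₁ − εx₂)²)/(2ε)`, and hence `x₁²x₂` is a coefficient-wise
limit of polynomials of the form `ℓ₁³ + ℓ₁ℓ₂²` with `ℓ₁, ℓ₂` linear forms. -/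
theorem cube_plus_xy2_degeneration :
    (∀ m : Fin 2 →₀ ℕ,
      Filter.Tendsto (fun ε : ℂ =>
          coeff m (C ((2 * ε)⁻¹) * (X 0 ^ 2 - (X 0 - C ε * X 1) ^ 2) :
            MvPolynomial (Fin 2) ℂ))
        (𝓝[≠] 0) (𝓝 (coeff m (X 0 * X 1 : MvPolynomial (Fin 2) ℂ)))) ∧
    (∃ L₁ L₂ : ℂ → (Fin 2 → ℂ), ∀ m : Fin 2 →₀ ℕ,
      Filter.Tendsto (fun ε : ℂ =>
          coeff m (linForm (L₁ ε) ^ 3 + linForm (L₁ ε) * linForm (L₂ ε) ^ 2))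
        (𝓝[≠] 0) (𝓝 (coeff m (X 0 ^ 2 * X 1 : MvPolynomial (Fin 2) ℂ)))) ∧
    coeffFn (X 0 ^ 2 * X 1 : MvPolynomial (Fin 2) ℂ) ∈
      closure (coeffFn '' orbitSet (X 0 ^ 3 + X 0 * X 1 ^ 2)) := by
  refine ⟨?_, ⟨degL₁, degL₂, coeff_tendsto⟩, ?_⟩
  · intro m
    have heq : ∀ᶠ ε : ℂ in 𝓝[≠] 0,
        coeff m (X 0 * X 1 : MvPolynomial (Fin 2) ℂ)
          - ε / 2 * coeff m ((X 1 : MvPolynomial (Fin 2) ℂ) ^ 2)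
        = coeff m (C ((2 * ε)⁻¹) * (X 0 ^ 2 - (X 0 - C ε * X 1) ^ 2) :
            MvPolynomial (Fin 2) ℂ) := by
      filter_upwards [self_mem_nhdsWithin] with ε hε
      have hε' : ε ≠ 0 := hε
      rw [part1_poly, coeff_C_mul, coeff_C_mul, coeff_sub, coeff_C_mul]
      have h2 : (coeff m (2 * (X 0 * X 1) : MvPolynomial (Fin 2) ℂ))
          = 2 * coeff m (X 0 * X 1 : MvPolynomial (Fin 2) ℂ) := by
        have h3 : (2 : MvPolynomial (Fin 2) ℂ) = C 2 := (map_ofNat C 2).symm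
        rw [h3, coeff_C_mul]
      rw [h2]
      field_simp
    have hcont : Filter.Tendsto (fun ε : ℂ =>
        coeff m (X 0 * X 1 : MvPolynomial (Fin 2) ℂ)
          - ε / 2 * coeff m ((X 1 : MvPolynomial (Fin 2) ℂ) ^ 2))
        (𝓝[≠] 0) (𝓝 (coeff m (X 0 * X 1 : MvPolynomial (Fin 2) ℂ))) := by
      have h : Continuous (fun ε : ℂ =>
          coeff m (X 0 * X 1 : MvPolynomial (Fin 2) ℂ)
            - ε / 2 * coeff m ((X 1 : MvPolynomial (Fin 2) ℂ) ^ 2)) := by fun_prop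
      have := (h.tendsto 0).mono_left (nhdsWithin_le_nhds : 𝓝[≠] (0:ℂ) ≤ 𝓝 0)
      simpa using this
    exact hcont.congr' heq
  · set f : MvPolynomial (Fin 2) ℂ := X 0 ^ 3 + X 0 * X 1 ^ 2 with hf
    set g : ℂ → Matrix (Fin 2) (Fin 2) ℂ :=
      fun ε => !![ε⁻¹, 0; Complex.I * ε⁻¹, -Complex.I * ε ^ 2 / 2] with hg
    have hsub : ∀ ε : ℂ, substMat (g ε) f
        = linForm (degL₁ ε) ^ 3 + linForm (degL₁ ε) * linForm (degL₂ ε) ^ 2 := by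
      intro ε
      simp [substMat, linForm, degL₁, degL₂, hf, hg, Fin.sum_univ_two,
        Matrix.cons_val_zero, Matrix.cons_val_one, Matrix.head_cons]
    have htend : Filter.Tendsto (fun ε : ℂ => coeffFn (substMat (g ε) f)) (𝓝[≠] 0)
        (𝓝 (coeffFn (X 0 ^ 2 * X 1 : MvPolynomial (Fin 2) ℂ))) := by
      rw [tendsto_pi_nhds]
      intro m
      have := coeff_tendsto m
      refine this.congr fun ε => ?_
      rw [coeffFn, hsub ε]
    refine mem_closure_of_tendsto htend ?_
    filter_upwards [self_mem_nhdsWithin] with ε hε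
    refine ⟨substMat (g ε) f, ⟨g ε, ?_, rfl⟩, rfl⟩
    have hε' : ε ≠ 0 := hε
    rw [hg]
    simp only [Matrix.det_fin_two_of]
    have h : ε⁻¹ * (-Complex.I * ε ^ 2 / 2) - 0 * (Complex.I * ε⁻¹)
        = -Complex.I * ε / 2 := by field_simp; ring
    rw [h]
    simp [isUnit_iff_ne_zero, Complex.I_ne_zero, hε']
end

section
/- lim_{ε→0} x₁·( (x₂² + (i(x₂ − εx₃))²)/(2ε) + (x₁ + εx₄)² ) = x₁x₂x₃ + x₁³ (coefficient-wise in ℂ[x₁,x₂,x₃,x₄]). Hence x₁(x₁² + x₂x₃) lies in the orbit closure of x₁(x₂² + x₃² + x₄²) under linear change of coordinates. -/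
open MvPolynomial Filter Topology

noncomputable def Pfam (ε : ℂ) : MvPolynomial (Fin 4) ℂ :=
  X 0 * (C ((2 * ε)⁻¹) * (X 1 ^ 2 + (C Complex.I * (X 1 - C ε * X 2)) ^ 2)
      + (X 0 + C ε * X 3) ^ 2)

lemma pfam_eq (ε : ℂ) (hε : ε ≠ 0) :
    Pfam ε = (X 0 * X 1 * X 2 + X 0 ^ 3)
      + C (2 * ε) * (X 0 ^ 2 * X 3) + C (ε ^ 2) * (X 0 * X 3 ^ 2)
      - C ((2 * ε)⁻¹ * ε ^ 2) * (X 0 * X 2 ^ 2) := by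
  have hA : (C ((2 * ε)⁻¹) : MvPolynomial (Fin 4) ℂ) * (2 * C ε) = 1 := by
    rw [show (2 : MvPolynomial (Fin 4) ℂ) * C ε = C (2 * ε) by
      rw [map_mul, map_ofNat]]
    rw [← map_mul, inv_mul_cancel₀ (mul_ne_zero two_ne_zero hε), map_one]
  have hJ : (C Complex.I : MvPolynomial (Fin 4) ℂ) ^ 2 = -1 := by
    rw [← map_pow, Complex.I_sq, map_neg, map_one]
  unfold Pfam
  simp only [map_mul, map_pow, map_ofNat]
  linear_combination (X 0 * C ((2*ε)⁻¹) *
      (X 1 - C ε * X 2) ^ 2 : MvPolynomial (Fin 4) ℂ) * hJ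
    + (X 0 * X 1 * X 2 : MvPolynomial (Fin 4) ℂ) * hA

lemma pfam_coeff_tendsto (m : Fin 4 →₀ ℕ) :
    Tendsto (fun ε : ℂ => coeff m (Pfam ε)) (𝓝[≠] 0)
      (𝓝 (coeff m (X 0 * X 1 * X 2 + X 0 ^ 3 : MvPolynomial (Fin 4) ℂ))) := by
  set c0 := coeff m (X 0 * X 1 * X 2 + X 0 ^ 3 : MvPolynomial (Fin 4) ℂ) with hc0
  set c1 := coeff m (X 0 ^ 2 * X 3 : MvPolynomial (Fin 4) ℂ) with hc1
  set c2 := coeff m (X 0 * X 3 ^ 2 : MvPolynomial (Fin 4) ℂ) with hc2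
  set c3 := coeff m (X 0 * X 2 ^ 2 : MvPolynomial (Fin 4) ℂ) with hc3
  have h : ∀ ε : ℂ, ε ≠ 0 →
      coeff m (Pfam ε) = c0 + 2 * ε * c1 + ε ^ 2 * c2 - ε / 2 * c3 := by
    intro ε hε
    rw [pfam_eq ε hε]
    have h2 : (2 * ε)⁻¹ * ε ^ 2 = ε / 2 := by field_simp
    simp only [coeff_add, coeff_sub, coeff_C_mul, h2, hc0, hc1, hc2, hc3]
  have hcont : Continuous fun ε : ℂ => c0 + 2 * ε * c1 + ε ^ 2 * c2 - ε / 2 * c3 := by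
    fun_prop
  have ht : Tendsto (fun ε : ℂ => c0 + 2 * ε * c1 + ε ^ 2 * c2 - ε / 2 * c3)
      (𝓝 0) (𝓝 c0) := by simpa using hcont.tendsto 0
  refine (tendsto_nhdsWithin_of_tendsto_nhds ht).congr' ?_
  exact Filter.eventuallyEq_of_mem self_mem_nhdsWithin fun ε hε => (h ε hε).symm

lemma pfam_mem (ε : ℂ) (hε : ε ≠ 0) :
    Pfam ε ∈ orbitSet (X 0 * (X 1 ^ 2 + X 2 ^ 2 + X 3 ^ 2)) := by
  obtain ⟨s, hs⟩ := IsAlgClosed.exists_pow_nat_eq ((2 * ε)⁻¹) (n := 2) (by norm_num)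
  have hs0 : s ≠ 0 := by
    intro h
    rw [h] at hs
    simp only [ne_eq, zero_pow, OfNat.ofNat_ne_zero, not_false_iff] at hs
    exact (inv_ne_zero (mul_ne_zero two_ne_zero hε)) hs.symm
  refine ⟨!![1,0,0,0; 0,s,0,0; 0,s*Complex.I, -(s*Complex.I*ε),0; 1,0,0,ε], ?_, ?_⟩
  · rw [isUnit_iff_ne_zero]
    have : (!![1,0,0,0; (0:ℂ),s,0,0; 0,s*Complex.I, -(s*Complex.I*ε),0;
        1,0,0,ε]).det = -(s ^ 2 * Complex.I * ε ^ 2) := by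
      simp [Matrix.det_succ_row_zero, Fin.sum_univ_succ]
      ring
    rw [this]
    simp [hs0, hε, Complex.I_ne_zero]
  · have hsC : (C s : MvPolynomial (Fin 4) ℂ) ^ 2 = C ε⁻¹ * C (1 / 2) := by
      rw [← map_pow, ← map_mul, hs]
      congr 1
      rw [mul_inv]
      ring
    unfold Pfam substMat
    rw [map_mul, map_add, map_add, map_pow, map_pow, map_pow, aeval_X, aeval_X,
      aeval_X, aeval_X]
    simp only [Fin.sum_univ_four]
    norm_num [Matrix.cons_val_zero, Matrix.cons_val_one, Matrix.head_cons,
      Matrix.cons_val_two, Matrix.tail_cons, Matrix.cons_val_three, map_neg, map_mul]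
    linear_combination (-(X 1 ^ 2 +
      (C Complex.I * (X 1 - C ε * X 2)) ^ 2) : MvPolynomial (Fin 4) ℂ) * hsC

/-- `lim_{ε→0} x₁·((x₂² + (i(x₂ − εx₃))²)/(2ε) + (x₁ + εx₄)²) = x₁x₂x₃ + x₁³`
coefficient-wise.  Hence `x₁(x₁² + x₂x₃)` lies in the orbit closure of
`x₁(x₂² + x₃² + x₄²)` under linear change of coordinates. -/
theorem fourC_in_orbitClosure_sixB :
    (∀ m : Fin 4 →₀ ℕ,
      Filter.Tendsto (fun ε : ℂ =>
          coeff m (X 0 * (C ((2 * ε)⁻¹) *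
                (X 1 ^ 2 + (C Complex.I * (X 1 - C ε * X 2)) ^ 2)
              + (X 0 + C ε * X 3) ^ 2) : MvPolynomial (Fin 4) ℂ))
        (𝓝[≠] 0)
        (𝓝 (coeff m (X 0 * X 1 * X 2 + X 0 ^ 3 : MvPolynomial (Fin 4) ℂ)))) ∧
    coeffFn (X 0 * (X 0 ^ 2 + X 1 * X 2) : MvPolynomial (Fin 4) ℂ) ∈
      closure (coeffFn '' orbitSet (X 0 * (X 1 ^ 2 + X 2 ^ 2 + X 3 ^ 2))) := by
  constructor
  · intro m
    exact pfam_coeff_tendsto m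
  · have htarget : (X 0 * (X 0 ^ 2 + X 1 * X 2) : MvPolynomial (Fin 4) ℂ)
        = X 0 * X 1 * X 2 + X 0 ^ 3 := by ring
    have htend : Tendsto (fun ε : ℂ => coeffFn (Pfam ε)) (𝓝[≠] 0)
        (𝓝 (coeffFn (X 0 * (X 0 ^ 2 + X 1 * X 2) : MvPolynomial (Fin 4) ℂ))) := by
      rw [tendsto_pi_nhds]
      intro m
      simp only [coeffFn, htarget]
      exact pfam_coeff_tendsto m
    refine mem_closure_of_tendsto htend ?_
    filter_upwards [self_mem_nhdsWithin] with ε hε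
    exact Set.mem_image_of_mem _ (pfam_mem ε hε)
end

section
/- lim_{ε→0} x₂·( x₁² + (x₃² + (i(x₃ − εx₂))²)/(2ε) ) = x₂(x₁² + x₂x₃) (coefficient-wise in ℂ[x₁,x₂,x₃]). Hence x₂(x₁² + x₂x₃) lies in the orbit closure of x₁(x₂² + x₃² + x₄²) (taking the fourth square to degenerate). -/
open MvPolynomial Filter Topology

noncomputable def gmat (c : ℂ) : Matrix (Fin 4) (Fin 4) ℂ :=
  !![0,1,0,0; 1,0,0,0; 0,0,c,0; 0, -(Complex.I * c⁻¹ / 2), Complex.I * c, c⁻¹^2]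

lemma gmat_det_isUnit (c : ℂ) (hc : c ≠ 0) : IsUnit (gmat c).det := by
  rw [isUnit_iff_ne_zero]
  simp [gmat, Matrix.det_succ_row_zero, Fin.sum_univ_succ, Fin.succAbove, hc]

lemma eps_identity (ε : ℂ) (hε : ε ≠ 0) :
    (X 1 * (X 0 ^ 2 + C ((2 * ε)⁻¹) *
        (X 2 ^ 2 + (C Complex.I * (X 2 - C ε * X 1)) ^ 2)) : MvPolynomial (Fin 4) ℂ)
    = X 1 * (X 0 ^ 2 + X 1 * X 2) + C (-(ε/2)) * X 1 ^ 3 := by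
  apply MvPolynomial.funext
  intro x
  simp only [map_add, map_mul, map_pow, map_sub, eval_X, eval_C]
  have h2 : Complex.I ^ 2 = -1 := Complex.I_sq
  field_simp
  ring_nf
  rw [h2]
  ring

lemma subst_identity (c : ℂ) (hc : c ≠ 0) :
    substMat (gmat c) (X 0 * (X 1 ^ 2 + X 2 ^ 2 + X 3 ^ 2)) =
      X 1 * (X 0 ^ 2 + X 1 * X 2) + C (-(c⁻¹^2)/4) * X 1 ^ 3
        + C (c⁻¹^4) * (X 1 * X 3 ^ 2) + C (2 * Complex.I * c⁻¹) * (X 1 * X 2 * X 3)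
        + C (-(Complex.I * c⁻¹^3)) * (X 1 ^ 2 * X 3) := by
  apply MvPolynomial.funext
  intro x
  simp [substMat, gmat, Fin.sum_univ_four, Matrix.vecHead, Matrix.vecTail]
  have h2 : Complex.I ^ 2 = -1 := Complex.I_sq
  rw [inv_eq_one_div]
  field_simp
  ring_nf
  rw [h2]
  ring

lemma inv_cast_tendsto :
    Tendsto (fun n : ℕ => ((n : ℂ) + 1)⁻¹) atTop (𝓝 0) := by
  have h : Tendsto (fun n : ℕ => ((n : ℝ) + 1)⁻¹) atTop (𝓝 0) := by
    simpa [one_div] using tendsto_one_div_add_atTop_nhds_zero_nat (𝕜 := ℝ)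
  have h2 : Tendsto (fun n : ℕ => ((((n : ℝ) + 1)⁻¹ : ℝ) : ℂ)) atTop (𝓝 ((0 : ℝ) : ℂ)) :=
    (Complex.continuous_ofReal.tendsto _).comp h
  simpa using h2.congr (fun n => by push_cast; ring)

/-- `lim_{ε→0} x₂·(x₁² + (x₃² + (i(x₃ − εx₂))²)/(2ε)) = x₂(x₁² + x₂x₃)`
coefficient-wise.  Hence `x₂(x₁² + x₂x₃)` lies in the orbit closure of
`x₁(x₂² + x₃² + x₄²)` under linear change of coordinates (the fourth square
degenerating). -/
theorem fiveA_in_orbitClosure_sixB :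
    (∀ m : Fin 4 →₀ ℕ,
      Filter.Tendsto (fun ε : ℂ =>
          coeff m (X 1 * (X 0 ^ 2 + C ((2 * ε)⁻¹) *
              (X 2 ^ 2 + (C Complex.I * (X 2 - C ε * X 1)) ^ 2)) :
            MvPolynomial (Fin 4) ℂ))
        (𝓝[≠] 0)
        (𝓝 (coeff m (X 1 * (X 0 ^ 2 + X 1 * X 2) : MvPolynomial (Fin 4) ℂ)))) ∧
    coeffFn (X 1 * (X 0 ^ 2 + X 1 * X 2) : MvPolynomial (Fin 4) ℂ) ∈
      closure (coeffFn '' orbitSet (X 0 * (X 1 ^ 2 + X 2 ^ 2 + X 3 ^ 2))) := by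
  set T : MvPolynomial (Fin 4) ℂ := X 1 * (X 0 ^ 2 + X 1 * X 2) with hT
  constructor
  · intro m
    have hcongr : (fun ε : ℂ =>
        coeff m (X 1 * (X 0 ^ 2 + C ((2 * ε)⁻¹) *
            (X 2 ^ 2 + (C Complex.I * (X 2 - C ε * X 1)) ^ 2)) :
          MvPolynomial (Fin 4) ℂ)) =ᶠ[𝓝[≠] 0]
        (fun ε : ℂ => coeff m T + (-(ε/2)) * coeff m (X 1 ^ 3 : MvPolynomial (Fin 4) ℂ)) := by
      filter_upwards [eventually_mem_nhdsWithin] with ε hε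
      rw [eps_identity ε hε, coeff_add, coeff_C_mul]
    rw [Filter.tendsto_congr' hcongr]
    have hcont : Tendsto (fun ε : ℂ => coeff m T + (-(ε/2)) * coeff m (X 1 ^ 3 : MvPolynomial (Fin 4) ℂ))
        (𝓝 0) (𝓝 (coeff m T)) := by
      have : Continuous (fun ε : ℂ => coeff m T + (-(ε/2)) * coeff m (X 1 ^ 3 : MvPolynomial (Fin 4) ℂ)) := by
        fun_prop
      have h0 := this.tendsto 0
      simpa using h0
    exact hcont.mono_left nhdsWithin_le_nhds
  · apply mem_closure_of_tendsto (f := fun n : ℕ =>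
      coeffFn (substMat (gmat ((n : ℂ) + 1)) (X 0 * (X 1 ^ 2 + X 2 ^ 2 + X 3 ^ 2))))
      (b := atTop)
    · rw [tendsto_pi_nhds]
      intro m
      have hne : ∀ n : ℕ, ((n : ℂ) + 1) ≠ 0 := fun n => Nat.cast_add_one_ne_zero n
      have heq : ∀ n : ℕ,
          coeffFn (substMat (gmat ((n : ℂ) + 1)) (X 0 * (X 1 ^ 2 + X 2 ^ 2 + X 3 ^ 2))) m =
          coeff m T + (-((((n : ℂ) + 1)⁻¹)^2)/4) * coeff m (X 1 ^ 3 : MvPolynomial (Fin 4) ℂ)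
            + ((((n : ℂ) + 1)⁻¹)^4) * coeff m (X 1 * X 3 ^ 2 : MvPolynomial (Fin 4) ℂ)
            + (2 * Complex.I * (((n : ℂ) + 1)⁻¹)) * coeff m (X 1 * X 2 * X 3 : MvPolynomial (Fin 4) ℂ)
            + (-(Complex.I * (((n : ℂ) + 1)⁻¹)^3)) * coeff m (X 1 ^ 2 * X 3 : MvPolynomial (Fin 4) ℂ) := by
        intro n
        rw [coeffFn, subst_identity _ (hne n)]
        simp only [coeff_add, coeff_C_mul]
        rfl
      simp only [heq]
      have h0 := inv_cast_tendsto
      have key : Tendsto (fun n : ℕ =>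
          coeff m T + (-((((n : ℂ) + 1)⁻¹)^2)/4) * coeff m (X 1 ^ 3 : MvPolynomial (Fin 4) ℂ)
            + ((((n : ℂ) + 1)⁻¹)^4) * coeff m (X 1 * X 3 ^ 2 : MvPolynomial (Fin 4) ℂ)
            + (2 * Complex.I * (((n : ℂ) + 1)⁻¹)) * coeff m (X 1 * X 2 * X 3 : MvPolynomial (Fin 4) ℂ)
            + (-(Complex.I * (((n : ℂ) + 1)⁻¹)^3)) * coeff m (X 1 ^ 2 * X 3 : MvPolynomial (Fin 4) ℂ))
          atTop (𝓝 (coeff m T + (-((0:ℂ)^2)/4) * coeff m (X 1 ^ 3 : MvPolynomial (Fin 4) ℂ)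
            + ((0:ℂ)^4) * coeff m (X 1 * X 3 ^ 2 : MvPolynomial (Fin 4) ℂ)
            + (2 * Complex.I * (0:ℂ)) * coeff m (X 1 * X 2 * X 3 : MvPolynomial (Fin 4) ℂ)
            + (-(Complex.I * (0:ℂ)^3)) * coeff m (X 1 ^ 2 * X 3 : MvPolynomial (Fin 4) ℂ))) := by
        apply Tendsto.add
        apply Tendsto.add
        apply Tendsto.add
        apply Tendsto.add
        · exact tendsto_const_nhds
        · exact (((h0.pow 2).neg.div_const 4).mul_const _)
        · exact ((h0.pow 4).mul_const _)
        · exact ((tendsto_const_nhds.mul h0).mul_const _)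
        · exact (((tendsto_const_nhds.mul (h0.pow 3))).neg.mul_const _)
      simpa [coeffFn] using key
    · filter_upwards with n
      exact ⟨substMat (gmat ((n : ℂ) + 1)) (X 0 * (X 1 ^ 2 + X 2 ^ 2 + X 3 ^ 2)),
        ⟨gmat ((n : ℂ) + 1), gmat_det_isUnit _ (Nat.cast_add_one_ne_zero n), rfl⟩, rfl⟩
end

section
/- Let k be an algebraically closed field, I ⊆ k[x₁,...,xₙ] an ideal with variety V = V(I) ⊆ kⁿ, and π: kⁿ → kᵐ the projection onto the first m coordinates. Then the Zariski closure of π(V) in kᵐ equals the variety of the elimination ideal J = I ∩ k[x₁,...,xₘ]. -/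
open MvPolynomial

/-- The Zariski topology on affine space `σ → k`. -/
noncomputable def zariskiTop (k : Type*) [CommSemiring k] (σ : Type*) :
    TopologicalSpace (σ → k) :=
  TopologicalSpace.generateFrom
    {U | ∃ f : MvPolynomial σ k, U = {x | MvPolynomial.eval x f ≠ 0}}

/-- **Closure theorem for elimination ideals.**  Let `k` be an algebraically closed
field, `I ⊆ k[x₁,...,xₙ]` an ideal with variety `V = V(I) ⊆ kⁿ`, and
`π : kⁿ → kᵐ` the projection onto the first `m` coordinates.  Then the Zariski closure
of `π(V)` in `kᵐ` equals the variety of the elimination ideal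
`J = I ∩ k[x₁,...,xₘ]` (modeled as the contraction of `I` along the inclusion
`k[x₁,...,xₘ] ⊆ k[x₁,...,xₙ]`). -/
theorem elimination_closure {k : Type*} [Field k] [IsAlgClosed k] {m n : ℕ}
    (h : m ≤ n) (I : Ideal (MvPolynomial (Fin n) k)) :
    let π : (Fin n → k) → (Fin m → k) := fun x i => x (Fin.castLE h i)
    let V : Set (Fin n → k) := {x | ∀ f ∈ I, eval x f = 0}
    let J : Ideal (MvPolynomial (Fin m) k) :=
      I.comap (rename (Fin.castLE h) : MvPolynomial (Fin m) k →ₐ[k] MvPolynomial (Fin n) k)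
    letI := zariskiTop k (Fin m);
    closure (π '' V) = {y | ∀ f ∈ J, eval y f = 0} := by
  intro π V J
  letI := zariskiTop k (Fin m)
  -- the subbasic opens form a basis
  have hbasis : TopologicalSpace.IsTopologicalBasis
      {U : Set (Fin m → k) | ∃ f : MvPolynomial (Fin m) k, U = {x | eval x f ≠ 0}} := by
    refine ⟨?_, ?_, rfl⟩
    · rintro U₁ ⟨f, rfl⟩ U₂ ⟨g, rfl⟩ x ⟨hx1, hx2⟩
      refine ⟨{x | eval x (f * g) ≠ 0}, ⟨f * g, rfl⟩, ?_, ?_⟩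
      · simp only [Set.mem_setOf_eq, map_mul]
        exact mul_ne_zero hx1 hx2
      · intro y hy
        simp only [Set.mem_setOf_eq, map_mul] at hy
        exact ⟨left_ne_zero_of_mul hy, right_ne_zero_of_mul hy⟩
    · refine Set.eq_univ_of_forall fun x => ?_
      exact ⟨{y | eval y (1 : MvPolynomial (Fin m) k) ≠ 0}, ⟨1, rfl⟩, by simp⟩
  -- evaluation along the projection
  have heval : ∀ (x : Fin n → k) (f : MvPolynomial (Fin m) k),
      eval (π x) f = eval x (rename (Fin.castLE h) f) := by
    intro x f
    rw [eval_rename]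
    rfl
  -- key consequence of the Nullstellensatz
  have key : ∀ f : MvPolynomial (Fin m) k, (∀ x ∈ V, eval (π x) f = 0) →
      ∀ y : Fin m → k, (∀ g ∈ J, eval y g = 0) → eval y f = 0 := by
    intro f hf y hy
    have h1 : rename (Fin.castLE h) f ∈ vanishingIdeal k (zeroLocus k I) := by
      intro x hx
      rw [MvPolynomial.aeval_eq_eval, ← heval]
      exact hf x hx
    rw [vanishingIdeal_zeroLocus_eq_radical] at h1
    obtain ⟨r, hr⟩ := h1
    have hJ : f ^ r ∈ J := by
      rw [Ideal.mem_comap, map_pow]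
      exact hr
    have h0 : (eval y f) ^ r = 0 := by
      rw [← map_pow]
      exact hy _ hJ
    rcases Nat.eq_zero_or_pos r with hr0 | hr0
    · exfalso
      rw [hr0, pow_zero] at h0
      exact one_ne_zero h0
    · exact pow_eq_zero_iff hr0.ne' |>.mp h0
  ext y
  constructor
  · intro hy
    have hclosed : IsClosed {y : Fin m → k | ∀ g ∈ J, eval y g = 0} := by
      rw [← isOpen_compl_iff]
      have hc : {y : Fin m → k | ∀ g ∈ J, eval y g = 0}ᶜ =
          ⋃ g ∈ J, {y : Fin m → k | eval y g ≠ 0} := by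
        ext z
        simp [Set.mem_setOf_eq]
      rw [hc]
      exact isOpen_biUnion fun g _ => hbasis.isOpen ⟨g, rfl⟩
    have hsub : π '' V ⊆ {y : Fin m → k | ∀ g ∈ J, eval y g = 0} := by
      rintro _ ⟨x, hx, rfl⟩ g hg
      rw [heval]
      exact hx _ (Ideal.mem_comap.mp hg)
    exact closure_minimal hsub hclosed hy
  · intro hy
    rw [hbasis.mem_closure_iff]
    rintro _ ⟨f, rfl⟩ hyf
    by_contra hempty
    have hall : ∀ x ∈ V, eval (π x) f = 0 := by
      intro x hx
      by_contra hne
      exact hempty ⟨π x, hne, ⟨x, hx, rfl⟩⟩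
    exact hyf (key f hall y hy)
end
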